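/- Let Ω ⊆ ℝ be bounded measurable of measure 1, spectral with spectrum Λ = {λ_0 = 0, λ_1, ..., λ_{p-1}} + pℤ, λ_i ∈ [0,p). For x ∈ ℝ set Ω_x = {j ∈ ℤ : x + j/p ∈ Ω}. Then for a.e. x ∈ ℝ, |Ω_x| = p, and for all i, i' ∈ {0,...,p-1}: (1/p) ∑_{j ∈ Ω_x} e^{2πi(λ_{i'} − λ_i) j/p} = δ_{i,i'} for a.e. x ∈ Ω. Equivalently, for a.e. x, the finite set (1/p)Ω_x is a spectrum for the finite set {λ_0, ..., λ_{p-1}}. -/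

import Mathlib

open MeasureTheory Complex Set Bornology

/-- The exponential function `e_λ(x) = e^{2πiλx}`. -/
noncomputable def expf (l : ℝ) : ℝ → ℂ := fun x =>
  Complex.exp (2 * Real.pi * Complex.I * (l : ℂ) * (x : ℂ))

/-- `Λ` is a spectrum for `Ω`: the exponentials `e_λ`, `λ ∈ Λ`, form an
orthogonal basis of `L²(Ω)` (mutually orthogonal and complete). -/
def IsSpectrum (Ω Λ : Set ℝ) : Prop :=
  (∀ l ∈ Λ, ∀ m ∈ Λ, l ≠ m →
    (∫ x in Ω, expf l x * (starRingEnd ℂ) (expf m x)) = 0) ∧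
  (∀ f : ℝ → ℂ, MemLp f 2 (volume.restrict Ω) →
    (∀ l ∈ Λ, (∫ x in Ω, f x * (starRingEnd ℂ) (expf l x)) = 0) →
    f =ᵐ[volume.restrict Ω] 0)

/-!
For `m ∈ ℝ` the function `x ↦ ∑_{j ∈ ℤ} 1_Ω(x + j/p) e^{2πim(x + j/p)}` is `1/p`-periodic and
bounded (because `Ω` is); unfolding the integral over a period shows that its `n`-th Fourier
coefficient is `p ∫_Ω e^{2πi(m - np)y} dy`. For `m = λ_{i'} - λ_i` this integral is `1` when
`n = 0` and `i = i'` (as `|Ω| = 1`) and `0` otherwise, by orthogonality of the spectrum: since all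
`λ_i` lie in `[0, p)`, `λ_{i'} = λ_i + np` forces `n = 0` and `i = i'`. A bounded periodic function
is determined almost everywhere by its Fourier coefficients (Parseval in `L²` of the circle), so
the periodized function equals `p δ_{ii'}` almost everywhere. Dividing out `e^{2πimx}` gives the
exponential sums over the fibre `Ω_x`, and `m = 0` counts its points.
-/

open AddCircle Filter Function

lemma Measurable.tsum_of_summable {α ι E : Type*} [MeasurableSpace α] [Countable ι]
    [NormedAddCommGroup E] [MeasurableSpace E] [BorelSpace E] [SecondCountableTopology E]
    {f : ι → α → E} (hf : ∀ i, Measurable (f i)) (hs : ∀ x, Summable fun i => f i x) :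
    Measurable fun x => ∑' i, f i x :=
  measurable_of_tendsto_metrizable' atTop (fun s => Finset.measurable_sum s fun i _ => hf i)
    (tendsto_pi_nhds.2 fun x => (hs x).hasSum)

lemma exists_finset_card_le_of_isBounded {S : Set ℝ} (hS : IsBounded S) {T : ℝ}
    (hT : 0 < T) :
    ∃ N : ℕ, ∀ x : ℝ, ∃ s : Finset ℤ, s.card ≤ N ∧ ∀ k : ℤ, x + k • T ∈ S → k ∈ s := by
  set M := ⌈Metric.diam S / T⌉₊
  refine ⟨2 * M + 1, fun x => ?_⟩
  by_cases hx : ∃ k₀ : ℤ, x + k₀ • T ∈ S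
  · obtain ⟨k₀, hk₀⟩ := hx
    refine ⟨Finset.Icc (k₀ - M) (k₀ + M), by rw [Int.card_Icc]; omega, fun k hk => ?_⟩
    have hdist : |(k - k₀ : ℝ)| * T ≤ Metric.diam S := by
      have := Metric.dist_le_diam_of_mem hS hk hk₀
      rwa [Real.dist_eq, zsmul_eq_mul, zsmul_eq_mul, add_sub_add_left_eq_sub, ← sub_mul,
        abs_mul, abs_of_pos hT] at this
    have hM : |(k - k₀ : ℝ)| ≤ M :=
      ((le_div_iff₀ hT).2 hdist).trans (Nat.le_ceil _)
    have hM' : |k - k₀| ≤ M := by exact_mod_cast hM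
    rw [Finset.mem_Icc]
    constructor <;> linarith [abs_le.1 hM']
  · exact ⟨∅, by simp, fun k hk => (hx ⟨k, hk⟩).elim⟩

section Periodize

variable {E : Type*} [NormedAddCommGroup E]

noncomputable def periodize (T : ℝ) (f : ℝ → E) (x : ℝ) : E := ∑' k : ℤ, f (x + k • T)

lemma periodic_periodize (T : ℝ) (f : ℝ → E) : Periodic (periodize T f) T := fun x => by
  simp only [periodize]
  rw [← (Equiv.addRight (1 : ℤ)).tsum_eq (fun k => f (x + k • T))]
  exact tsum_congr fun k => by rw [Equiv.coe_addRight, add_one_zsmul]; abel_nf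

section BoundedSupport

variable {T : ℝ} {S : Set ℝ} {f : ℝ → E}

lemma exists_card_le_hasSum_of_isBounded (hS : IsBounded S) (hf : ∀ x ∉ S, f x = 0)
    (hT : 0 < T) : ∃ N : ℕ, ∀ x, ∃ s : Finset ℤ, s.card ≤ N ∧
      HasSum (fun k : ℤ => f (x + k • T)) (∑ k ∈ s, f (x + k • T)) := by
  obtain ⟨N, hN⟩ := exists_finset_card_le_of_isBounded hS hT
  refine ⟨N, fun x => ?_⟩
  obtain ⟨s, hcard, hs⟩ := hN x
  exact ⟨s, hcard, hasSum_sum_of_ne_finset_zero fun k hk => hf _ fun h => hk (hs k h)⟩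

lemma measurable_periodize_of_isBounded [MeasurableSpace E] [BorelSpace E]
    [SecondCountableTopology E] (hfm : Measurable f) (hS : IsBounded S)
    (hf : ∀ x ∉ S, f x = 0) (hT : 0 < T) : Measurable (periodize T f) := by
  obtain ⟨N, hN⟩ := exists_card_le_hasSum_of_isBounded hS hf hT
  exact Measurable.tsum_of_summable (fun k => hfm.comp (measurable_add_const _))
    fun x => (hN x).choose_spec.2.summable

lemma exists_norm_periodize_le_of_isBounded {B : ℝ} (hB : ∀ x, ‖f x‖ ≤ B)
    (hS : IsBounded S) (hf : ∀ x ∉ S, f x = 0) (hT : 0 < T) : ∃ C, ∀ x, ‖periodize T f x‖ ≤ C := by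
  obtain ⟨N, hN⟩ := exists_card_le_hasSum_of_isBounded hS hf hT
  have hB0 : 0 ≤ B := (norm_nonneg _).trans (hB 0)
  refine ⟨N * B, fun x => ?_⟩
  obtain ⟨s, hcard, hsum⟩ := hN x
  rw [periodize, hsum.tsum_eq]
  calc ‖∑ k ∈ s, f (x + k • T)‖ ≤ ∑ k ∈ s, ‖f (x + k • T)‖ := norm_sum_le _ _
    _ ≤ s.card * B := by simpa using Finset.sum_le_card_nsmul s _ B fun k _ => hB _
    _ ≤ N * B := by gcongr

end BoundedSupport

variable [NormedSpace ℝ E] {T : ℝ}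

lemma MeasureTheory.Integrable.hasSum_intervalIntegral_comp_add_zsmul {f : ℝ → E}
    (hf : Integrable f) (hT : 0 < T) :
    HasSum (fun k : ℤ => ∫ x in (0 : ℝ)..T, f (x + k • T)) (∫ x, f x) := by
  have h := hasSum_integral_iUnion (fun k : ℤ => measurableSet_Ioc)
    (Set.pairwise_disjoint_Ioc_add_zsmul 0 T) hf.integrableOn
  rw [iUnion_Ioc_add_zsmul hT, Measure.restrict_univ] at h
  refine h.congr_fun fun k => ?_
  rw [intervalIntegral.integral_comp_add_right, intervalIntegral.integral_of_le (by linarith),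
    zero_add, add_one_zsmul, add_comm T, zero_add]

lemma MeasureTheory.Integrable.intervalIntegral_periodize {f : ℝ → E} (hf : Integrable f)
    (hT : 0 < T) :
    ∫ x in (0 : ℝ)..T, periodize T f x = ∫ x, f x := by
  have hsum : Summable fun k : ℤ => ∫ x in Ioc 0 T, ‖f (x + k • T)‖ := by
    simpa only [intervalIntegral.integral_of_le hT.le]
      using (hf.norm.hasSum_intervalIntegral_comp_add_zsmul hT).summable
  simp only [periodize]
  rw [intervalIntegral.integral_of_le hT.le,
    ← integral_tsum_of_summable_integral_norm (fun k => (hf.comp_add_right _).integrableOn) hsum]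
  simpa only [intervalIntegral.integral_of_le hT.le]
    using (hf.hasSum_intervalIntegral_comp_add_zsmul hT).tsum_eq

end Periodize

section Fourier

variable {E : Type*} [NormedAddCommGroup E] [NormedSpace ℂ E] {T : ℝ} [hT : Fact (0 < T)]

lemma MeasureTheory.Integrable.fourierCoeff_lift_periodize {f : ℝ → E} (hf : Integrable f)
    (n : ℤ) : fourierCoeff (periodic_periodize T f).lift n
      = (1 / T) • ∫ x : ℝ, fourier (-n) (x : AddCircle T) • f x := by
  have hg : Integrable fun x : ℝ => fourier (-n) (x : AddCircle T) • f x :=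
    hf.bdd_smul 1
      ((map_continuous (fourier (-n))).comp continuous_quotient_mk').aestronglyMeasurable
      (ae_of_all _ fun x => by rw [fourier_apply, Circle.norm_coe])
  rw [fourierCoeff_eq_intervalIntegral _ n 0, zero_add, ← hg.intervalIntegral_periodize hT.out]
  congr 1
  refine intervalIntegral.integral_congr fun x _ => ?_
  simp only [Periodic.lift_coe, periodize, ← tsum_const_smul'']
  refine tsum_congr fun k => ?_
  rw [AddCircle.coe_add, AddCircle.coe_zsmul, AddCircle.coe_period, smul_zero, add_zero]

end Fourier

section Uniqueness

variable {T : ℝ} [hT : Fact (0 < T)]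

lemma ae_eq_of_fourierCoeff_eq {f g : AddCircle T → ℂ} (hf : MemLp f 2 haarAddCircle)
    (hg : MemLp g 2 haarAddCircle) (h : fourierCoeff f = fourierCoeff g) :
    f =ᵐ[haarAddCircle] g := by
  rw [← hf.toLp_eq_toLp_iff hg]
  apply fourierBasis.repr.injective
  ext n
  rw [fourierBasis_repr, fourierBasis_repr, fourierCoeff_congr_ae hf.coeFn_toLp,
    fourierCoeff_congr_ae hg.coeFn_toLp, h]

lemma AddCircle.ae_coe_of_ae {p : AddCircle T → Prop} (h : ∀ᵐ z ∂haarAddCircle, p z) :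
    ∀ᵐ x : ℝ, p x := by
  have hvol : ∀ᵐ z : AddCircle T, p z := by
    rw [volume_eq_smul_haarAddCircle]
    exact Measure.ae_smul_measure h _
  rw [← Measure.restrict_univ (μ := volume), ← iUnion_Ioc_add_zsmul hT.out 0,
    ae_restrict_iUnion_iff]
  intro k
  rw [add_one_zsmul, ← add_assoc]
  exact (AddCircle.measurePreserving_mk T _).quasiMeasurePreserving.ae hvol

lemma fourierCoeff_const (c : ℂ) :
    fourierCoeff (fun _ : AddCircle T => c) = Pi.single 0 c := by
  have : (fun _ : AddCircle T => c) = c • ⇑(fourier 0) := funext fun z => by simp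
  ext n
  rw [this, fourierCoeff.const_smul, fourierCoeff_fourier]
  by_cases hn : n = 0 <;> simp [hn]

lemma periodize_ae_eq_const {f : ℝ → ℂ} (hf : Integrable f)
    (hmeas : Measurable (periodize T f)) {C : ℝ} (hbdd : ∀ x, ‖periodize T f x‖ ≤ C) {c : ℂ}
    (hc : ∀ n : ℤ, ∫ x : ℝ, fourier (-n) (x : AddCircle T) • f x = if n = 0 then c else 0) :
    ∀ᵐ x, periodize T f x = (1 / T) • c := by
  have hF : MemLp (periodic_periodize T f).lift 2 haarAddCircle :=
    MemLp.of_bound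
      (measurable_from_quotient (f := (periodic_periodize T f).lift).2 hmeas).aestronglyMeasurable
      C (ae_of_all _ fun z => QuotientAddGroup.induction_on z hbdd)
  have hcoeff : fourierCoeff (periodic_periodize T f).lift
      = fourierCoeff fun _ : AddCircle T => (1 / T) • c := by
    ext n
    rw [hf.fourierCoeff_lift_periodize, hc, fourierCoeff_const, Pi.single_apply]
    split_ifs <;> simp
  filter_upwards [ae_coe_of_ae (ae_eq_of_fourierCoeff_eq hF (memLp_const _) hcoeff)] with x hx
  simpa using hx

end Uniqueness

section Exponentials

lemma norm_expf (l x : ℝ) : ‖expf l x‖ = 1 := by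
  rw [expf, norm_exp]
  simp

lemma continuous_expf (l : ℝ) : Continuous (expf l) := by
  unfold expf
  fun_prop

lemma expf_ne_zero (l x : ℝ) : expf l x ≠ 0 := exp_ne_zero _

lemma expf_zero : expf 0 = 1 := funext fun x => by simp [expf]

lemma expf_mul_conj_expf (l m x : ℝ) :
    expf l x * (starRingEnd ℂ) (expf m x) = expf (l - m) x := by
  rw [expf, expf, expf, ← exp_conj, ← exp_add]
  congr 1
  simp only [map_mul, conj_I, conj_ofReal, map_ofNat]
  push_cast
  ring

lemma fourier_neg_smul_expf {T : ℝ} [Fact (0 < T)] (n : ℤ) (m x : ℝ) :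
    fourier (-n) (x : AddCircle T) • expf m x = expf (m - n / T) x := by
  rw [fourier_coe_apply, expf, expf, smul_eq_mul, ← exp_add]
  congr 1
  push_cast
  ring

lemma IsSpectrum.setIntegral_expf_sub_eq_zero {Ω Λ : Set ℝ} (h : IsSpectrum Ω Λ) {l m : ℝ}
    (hl : l ∈ Λ) (hm : m ∈ Λ) (hlm : l ≠ m) : ∫ x in Ω, expf (l - m) x = 0 := by
  simpa only [expf_mul_conj_expf] using h.1 l hl m hm hlm

variable {Ω : Set ℝ}

lemma integrable_indicator_expf (hbd : IsBounded Ω) (hΩ : MeasurableSet Ω) (m : ℝ) :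
    Integrable (Ω.indicator (expf m)) :=
  (integrable_indicator_iff hΩ).2
    (((continuous_expf m).continuousOn.integrableOn_compact hbd.isCompact_closure).mono_set
      subset_closure)

lemma integral_fourier_smul_indicator_expf {T : ℝ} [Fact (0 < T)] (hΩ : MeasurableSet Ω)
    (n : ℤ) (m : ℝ) :
    ∫ x : ℝ, fourier (-n) (x : AddCircle T) • Ω.indicator (expf m) x
      = ∫ x in Ω, expf (m - n / T) x := by
  have h : ∀ x : ℝ, fourier (-n) (x : AddCircle T) • Ω.indicator (expf m) x
      = Ω.indicator (expf (m - n / T)) x := fun x => by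
    by_cases hx : x ∈ Ω
    · rw [indicator_of_mem hx, indicator_of_mem hx, fourier_neg_smul_expf]
    · rw [indicator_of_notMem hx, indicator_of_notMem hx, smul_zero]
  simp_rw [h]
  exact integral_indicator hΩ

lemma periodize_indicator_expf_ae_eq_const (hbd : IsBounded Ω) (hΩ : MeasurableSet Ω)
    {T : ℝ} [hT : Fact (0 < T)] (m : ℝ) {c : ℂ}
    (hc : ∀ n : ℤ, ∫ x in Ω, expf (m - n / T) x = if n = 0 then c else 0) :
    ∀ᵐ x, periodize T (Ω.indicator (expf m)) x = (1 / T) • c := by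
  have h0 : ∀ x ∉ Ω, Ω.indicator (expf m) x = 0 := fun x hx => indicator_of_notMem hx _
  obtain ⟨C, hC⟩ := exists_norm_periodize_le_of_isBounded
    (fun x => (norm_indicator_le_norm_self _ x).trans (norm_expf m x).le) hbd h0 hT.out
  refine periodize_ae_eq_const (integrable_indicator_expf hbd hΩ m)
    (measurable_periodize_of_isBounded ((continuous_expf m).measurable.indicator hΩ) hbd h0 hT.out)
    hC fun n => ?_
  rw [integral_fourier_smul_indicator_expf hΩ, hc]

lemma periodize_indicator_expf (Ω : Set ℝ) (p : ℕ) (m x : ℝ) :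
    periodize (p : ℝ)⁻¹ (Ω.indicator (expf m)) x
      = expf m x * ∑' j : {j : ℤ // x + (j : ℝ) / p ∈ Ω}, exp (2 * Real.pi * I * m * j / p) := by
  rw [periodize, ← tsum_mul_left]
  refine Eq.trans (tsum_congr fun j => ?_) (tsum_subtype {j : ℤ | x + (j : ℝ) / p ∈ Ω}
    fun j : ℤ => expf m x * exp (2 * Real.pi * I * m * (j : ℂ) / p)).symm
  rw [zsmul_eq_mul, ← div_eq_mul_inv]
  by_cases hj : j ∈ {j : ℤ | x + (j : ℝ) / p ∈ Ω}
  · rw [indicator_of_mem hj, indicator_of_mem (show x + (j : ℝ) / p ∈ Ω from hj), expf, expf,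
      ← exp_add]
    congr 1
    push_cast
    ring
  · rw [indicator_of_notMem hj, indicator_of_notMem (show x + (j : ℝ) / p ∉ Ω from hj)]

end Exponentials

lemma int_eq_zero_of_add_mul_mem_Ico {a p : ℝ} (hp : 0 < p) (ha : a ∈ Ico 0 p) {n : ℤ}
    (hn : a + n * p ∈ Ico 0 p) : n = 0 :=
  (existsUnique_sub_zsmul_mem_Ico hp (a + n * p) 0).unique
    (by rwa [zsmul_eq_mul, add_sub_cancel_right, zero_add])
    (by rwa [zero_smul, sub_zero, zero_add])

lemma IsSpectrum.setIntegral_expf_eq_ite {Ω Λ : Set ℝ} (hspec : IsSpectrum Ω Λ)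
    (hvol : volume Ω = 1) {p : ℕ} (hp : 0 < p) {lam : Fin p → ℝ}
    (hlam_mem : ∀ i, lam i ∈ Ico (0 : ℝ) p) (hlam_inj : Injective lam)
    (hΛ : ∀ i (k : ℤ), lam i + k * p ∈ Λ) (i i' : Fin p) (n : ℤ) :
    ∫ x in Ω, expf (lam i' - lam i - n * p) x = if n = 0 ∧ i = i' then 1 else 0 := by
  by_cases hd : n = 0 ∧ i = i'
  · obtain ⟨rfl, rfl⟩ := hd
    simp [expf_zero, measureReal_def, hvol]
  · rw [if_neg hd, sub_sub]
    refine hspec.setIntegral_expf_sub_eq_zero (by simpa using hΛ i' 0) (hΛ i n) fun heq => hd ?_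
    have hn : n = 0 :=
      int_eq_zero_of_add_mul_mem_Ico (Nat.cast_pos.2 hp) (hlam_mem i) (heq ▸ hlam_mem i')
    subst hn
    exact ⟨rfl, hlam_inj (by simpa using heq.symm)⟩

lemma IsSpectrum.periodize_indicator_expf_ae_eq {Ω Λ : Set ℝ} (hspec : IsSpectrum Ω Λ)
    (hbd : IsBounded Ω) (hmeas : MeasurableSet Ω) (hvol : volume Ω = 1) {p : ℕ} (hp : 0 < p)
    {lam : Fin p → ℝ} (hlam_mem : ∀ i, lam i ∈ Ico (0 : ℝ) p) (hlam_inj : Injective lam)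
    (hΛ : ∀ i (k : ℤ), lam i + k * p ∈ Λ) (i i' : Fin p) :
    ∀ᵐ x, periodize (p : ℝ)⁻¹ (Ω.indicator (expf (lam i' - lam i))) x
      = p * if i = i' then 1 else 0 := by
  have : Fact (0 < (p : ℝ)⁻¹) := ⟨inv_pos.2 (Nat.cast_pos.2 hp)⟩
  have h := periodize_indicator_expf_ae_eq_const hbd hmeas (lam i' - lam i) fun n => by
    rw [div_inv_eq_mul, hspec.setIntegral_expf_eq_ite hvol hp hlam_mem hlam_inj hΛ, ite_and]
  simpa only [div_inv_eq_mul, one_mul, real_smul, ofReal_natCast] using h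

theorem fibers_of_spectral_set_have_common_finite_spectrum_general
    (Ω : Set ℝ) (hbd : IsBounded Ω) (hmeas : MeasurableSet Ω)
    (hvol : volume Ω = 1)
    (p : ℕ) (hp : 0 < p)
    (lam : Fin p → ℝ)
    (hlam_mem : ∀ i, lam i ∈ Ico (0 : ℝ) p) (hlam_inj : Function.Injective lam)
    (Λ : Set ℝ) (hΛ : Λ = {x : ℝ | ∃ i : Fin p, ∃ k : ℤ, x = lam i + k * p})
    (hspec : IsSpectrum Ω Λ) :
    (∀ᵐ x : ℝ ∂volume, ({j : ℤ | x + (j : ℝ) / p ∈ Ω}).ncard = p) ∧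
    (∀ᵐ x : ℝ ∂(volume.restrict Ω), ∀ i i' : Fin p,
      (1 / p : ℂ) * ∑' j : {j : ℤ // x + (j : ℝ) / p ∈ Ω},
        Complex.exp (2 * Real.pi * Complex.I * ((lam i' : ℂ) - lam i) * ((j : ℤ) : ℂ) / p)
      = if i = i' then 1 else 0) := by
  have hΛ' : ∀ i (k : ℤ), lam i + k * p ∈ Λ := fun i k => hΛ ▸ ⟨i, k, rfl⟩
  have key : ∀ i i' : Fin p, ∀ᵐ x : ℝ, ∑' j : {j : ℤ // x + (j : ℝ) / p ∈ Ω},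
      Complex.exp (2 * Real.pi * Complex.I * ((lam i' : ℂ) - lam i) * ((j : ℤ) : ℂ) / p)
        = p * if i = i' then 1 else 0 := fun i i' => by
    filter_upwards [hspec.periodize_indicator_expf_ae_eq hbd hmeas hvol hp hlam_mem hlam_inj hΛ'
      i i'] with x hx
    rw [periodize_indicator_expf] at hx
    push_cast at hx
    split_ifs at hx ⊢ with hii
    · subst hii
      simpa [expf_zero] using hx
    · simpa [expf_ne_zero] using hx
  refine ⟨?_, ae_restrict_of_ae ?_⟩
  · filter_upwards [key ⟨0, hp⟩ ⟨0, hp⟩] with x hx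
    -- No finiteness is needed: `tsum_const` and `ncard` both give `0` on an infinite fibre.
    simp only [sub_self, mul_zero, zero_mul, zero_div, exp_zero, tsum_const, nsmul_eq_mul,
      mul_one, if_pos] at hx
    rw [← Nat.card_coe_set_eq]
    exact_mod_cast hx
  · filter_upwards [eventually_all.2 fun i => eventually_all.2 (key i)] with x hx i i'
    rw [hx i i', ← mul_assoc, one_div, inv_mul_cancel₀ (Nat.cast_ne_zero.2 hp.ne'), one_mul]

/-- If `Ω`, of measure 1, has spectrum `Λ = {λ_0 = 0, ..., λ_{p-1}} + pℤ`, then for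
a.e. `x` the fiber `Ω_x = {j ∈ ℤ : x + j/p ∈ Ω}` has exactly `p` elements, and
`(1/p) ∑_{j∈Ω_x} e^{2πi(λ_{i'}-λ_i)j/p} = δ_{ii'}`, i.e. `(1/p)Ω_x` is a spectrum
for the finite set `{λ_0, ..., λ_{p-1}}`. -/
theorem fibers_of_spectral_set_have_common_finite_spectrum
    (Ω : Set ℝ) (hbd : IsBounded Ω) (hmeas : MeasurableSet Ω)
    (hvol : volume Ω = 1)
    (p : ℕ) (hp : 0 < p)
    (lam : Fin p → ℝ) (hlam0 : lam ⟨0, hp⟩ = 0)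
    (hlam_mem : ∀ i, lam i ∈ Ico (0 : ℝ) p) (hlam_inj : Function.Injective lam)
    (Λ : Set ℝ) (hΛ : Λ = {x : ℝ | ∃ i : Fin p, ∃ k : ℤ, x = lam i + k * p})
    (hspec : IsSpectrum Ω Λ) :
    (∀ᵐ x : ℝ ∂volume, ({j : ℤ | x + (j : ℝ) / p ∈ Ω}).ncard = p) ∧
    (∀ᵐ x : ℝ ∂(volume.restrict Ω), ∀ i i' : Fin p,
      (1 / p : ℂ) * ∑' j : {j : ℤ // x + (j : ℝ) / p ∈ Ω},
        Complex.exp (2 * Real.pi * Complex.I * ((lam i' : ℂ) - lam i) * ((j : ℤ) : ℂ) / p)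
      = if i = i' then 1 else 0) :=
  fibers_of_spectral_set_have_common_finite_spectrum_general Ω hbd hmeas hvol p hp lam hlam_mem
    hlam_inj Λ hΛ hspec
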